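/- Let M be a positive integer and f : ℤ → ℂ an odd M-periodic function (f(-n) = -f(n)). Then for every τ ∈ ℍ: Θ(τ; 1, f, M) = i · (τ/i)^{-3/2} · Θ(-1/τ; 1, U_M f, M), where U_M f is the discrete Fourier transform of f (an odd M-periodic function) and (τ/i)^{-3/2} is the principal branch. -/

import Mathlib

open Complex

/-- The partial theta series `Θ(τ; ν, f, M) = Σ_{n≥1} n^ν f(n) e^{iπn²τ/M}`. -/
noncomputable def theta (M : ℕ) (ν : ℕ) (f : ℤ → ℂ) (τ : ℂ) : ℂ :=
  ∑' n : ℕ, ((n : ℂ) + 1) ^ ν * f (n + 1) *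
    Complex.exp (Real.pi * Complex.I * ((n : ℂ) + 1) ^ 2 * τ / M)

/-- The discrete Fourier transform `U_M f` of an `M`-periodic function `f : ℤ → ℂ`. -/
noncomputable def dft (M : ℕ) (f : ℤ → ℂ) (n : ℤ) : ℂ :=
  (Real.sqrt M : ℂ)⁻¹ * ∑ ℓ ∈ Finset.range M, f ℓ *
    Complex.exp (-2 * Real.pi * Complex.I * ℓ * n / M)

/-!
Summing over residues `n = a + mM` writes the full odd series `∑_{n ∈ ℤ} n f(n) e^{iπn²τ/M}`
as `M ∑_a f(a) ϑ''(a/M, Mτ)`, where `ϑ''(z, τ) = ∑_n (n + z) e^{iπ(n+z)²τ}`. The Jacobi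
functional equation converts `ϑ''(z, Mτ)` into `ϑ'(z, -1/(Mτ))`, and expanding
`ϑ'(a/M, ·)` in `e^{2πi m a/M}` and summing against `f(a)` produces the Fourier transform `f̂(m)`.
Both `f` and `f̂` are odd, so each full series over `ℤ` is twice the partial series over `n ≥ 1`.
-/

open Finset Function HurwitzZeta
open scoped Real

noncomputable def thetaTerm (M : ℕ) (g : ℤ → ℂ) (σ : ℂ) (n : ℤ) : ℂ :=
  n * g n * cexp (π * I * n ^ 2 * σ / M)

lemma theta_one_eq_half_of_hasSum {M : ℕ} {g : ℤ → ℂ} (hg : g.Odd) {σ s : ℂ}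
    (h : HasSum (thetaTerm M g σ) s) : theta M 1 g σ = s / 2 := by
  have heven : (thetaTerm M g σ).Even := fun n ↦ by
    simp only [thetaTerm, hg n, Int.cast_neg, neg_sq]
    ring
  rw [← h.tsum_eq, tsum_int_eq_zero_add_two_mul_tsum_pnat heven h.summable,
    tsum_pnat_eq_tsum_succ (f := fun n : ℕ ↦ thetaTerm M g σ n), theta]
  simp [thetaTerm]

lemma hasSum_int_of_hasSum_residues {α : Type*} [AddCommMonoid α] [TopologicalSpace α]
    [ContinuousAdd α] (M : ℕ) [NeZero M] {G : ℤ → α} {s : Fin M → α}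
    (h : ∀ a : Fin M, HasSum (fun m : ℤ ↦ G (m * M + a)) (s a)) : HasSum G (∑ a, s a) := by
  classical
  rw [← (Int.divModEquiv M).symm.hasSum_iff]
  have hslice : ∀ a : Fin M,
      HasSum (fun p : ℤ × Fin M ↦ if p.2 = a then G (p.1 * M + p.2) else 0) (s a) := by
    intro a
    rw [← (Prod.mk_left_injective a).hasSum_iff]
    · simpa [comp_def] using h a
    · rintro ⟨m, b⟩ hp
      rw [if_neg]
      rintro rfl
      exact hp ⟨m, rfl⟩
  convert hasSum_sum fun a _ ↦ hslice a using 1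
  funext p
  simp

lemma hasSum_jacobiTheta₂'' (z : ℂ) {τ : ℂ} (hτ : 0 < τ.im) :
    HasSum (fun n : ℤ ↦ (n + z) * cexp (π * I * (n + z) ^ 2 * τ)) (jacobiTheta₂'' z τ) := by
  have h := ((hasSum_jacobiTheta₂'_term (z * τ) hτ).div_const (2 * π * I) |>.add
    ((hasSum_jacobiTheta₂_term (z * τ) hτ).mul_left z)).mul_left (cexp (π * I * z ^ 2 * τ))
  refine h.congr_fun fun n ↦ ?_
  rw [jacobiTheta₂'_term, mul_assoc (2 * (π : ℂ) * I), mul_div_cancel_left₀ _ two_pi_I_ne_zero,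
    jacobiTheta₂_term, ← add_mul, mul_left_comm, ← Complex.exp_add]
  congrm (_ * cexp ?_)
  ring

lemma hasSum_thetaTerm_of_periodic {M : ℕ} [NeZero M] {f : ℤ → ℂ} (hf : Periodic f M)
    {τ : ℂ} (hτ : 0 < τ.im) :
    HasSum (thetaTerm M f τ) (M * ∑ a ∈ range M, f a * jacobiTheta₂'' (a / M) (M * τ)) := by
  have hM : (M : ℂ) ≠ 0 := Nat.cast_ne_zero.mpr (NeZero.ne M)
  have hMτ : 0 < (M * τ).im := by
    simpa using mul_pos (Nat.cast_pos.mpr (NeZero.pos M)) hτ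
  rw [mul_sum, ← Fin.sum_univ_eq_sum_range (fun a ↦ M * (f a * jacobiTheta₂'' (a / M) (M * τ)))]
  refine hasSum_int_of_hasSum_residues M fun a ↦ ?_
  rw [← mul_assoc]
  refine ((hasSum_jacobiTheta₂'' (a / M) hMτ).mul_left (M * f a)).congr_fun fun m ↦ ?_
  have hper : f (a + m * M) = f a := by simpa using hf.int_mul m a
  rw [thetaTerm, add_comm, hper]
  push_cast
  field_simp
  ring_nf

lemma sum_range_comp_neg_of_periodic {α : Type*} [AddCommMonoid α] {M : ℕ} {h : ℤ → α}
    (hh : Periodic h M) : ∑ ℓ ∈ range M, h (-ℓ) = ∑ ℓ ∈ range M, h ℓ := by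
  cases M with
  | zero => simp
  | succ k =>
    rw [sum_range_succ', sum_range_succ' (fun ℓ ↦ h ℓ), ← sum_range_reflect]
    congr 1
    refine sum_congr rfl fun ℓ hℓ ↦ ?_
    rw [← hh]
    congr 1
    have := mem_range.mp hℓ
    omega

lemma dft_odd {M : ℕ} [NeZero M] {f : ℤ → ℂ} (hf : Periodic f M) (hodd : f.Odd) :
    (dft M f).Odd := by
  intro n
  set h : ℤ → ℂ := fun ℓ ↦ f ℓ * cexp (-2 * π * I * ℓ * n / M)
  have hh : Periodic h M := fun ℓ ↦ by
    have hM : (M : ℂ) ≠ 0 := Nat.cast_ne_zero.mpr (NeZero.ne M)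
    simp only [h, hf ℓ]
    congr 1
    rw [← (Complex.exp_periodic.int_mul (-n)) (-2 * π * I * ℓ * n / M)]
    congr 1
    push_cast
    field_simp
    ring
  have hterm : ∀ ℓ : ℕ, f ℓ * cexp (-2 * π * I * ℓ * ((-n : ℤ) : ℂ) / M) = -h (-ℓ) := by
    intro ℓ
    simp only [h, hodd ℓ, Int.cast_neg, Int.cast_natCast]
    ring_nf
  rw [dft, dft, sum_congr rfl fun ℓ _ ↦ hterm ℓ, sum_neg_distrib,
    sum_range_comp_neg_of_periodic hh, mul_neg]
  rfl

lemma sum_mul_exp_eq_sqrt_mul_dft_neg {M : ℕ} [NeZero M] (f : ℤ → ℂ) (m : ℤ) :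
    ∑ ℓ ∈ range M, f ℓ * cexp (2 * π * I * ℓ * m / M) = √M * dft M f (-m) := by
  have hM : (√M : ℂ) ≠ 0 := by simpa using NeZero.ne M
  rw [dft, ← mul_assoc, mul_inv_cancel₀ hM, one_mul]
  refine sum_congr rfl fun ℓ _ ↦ ?_
  congr 2
  push_cast
  ring

lemma hasSum_thetaTerm_dft {M : ℕ} [NeZero M] {f : ℤ → ℂ} (hf : Periodic f M) (hodd : f.Odd)
    {σ : ℂ} (hσ : 0 < σ.im) :
    HasSum (thetaTerm M (dft M f) σ)
      (-(2 * π * I * √M)⁻¹ * ∑ ℓ ∈ range M, f ℓ * jacobiTheta₂' (ℓ / M) (σ / M)) := by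
  have hσM : 0 < (σ / M).im := by
    rw [Complex.div_natCast_im]
    exact div_pos hσ (Nat.cast_pos.mpr (NeZero.pos M))
  have h := (hasSum_sum (s := range M) fun ℓ _ ↦
    (hasSum_jacobiTheta₂'_term (ℓ / M : ℂ) hσM).mul_left (f ℓ)).mul_left (-(2 * π * I * √M)⁻¹)
  refine h.congr_fun fun m ↦ ?_
  have hsum : ∑ ℓ ∈ range M, f ℓ * jacobiTheta₂'_term m (ℓ / M) (σ / M)
      = 2 * π * I * m * cexp (π * I * m ^ 2 * σ / M) *
        ∑ ℓ ∈ range M, f ℓ * cexp (2 * π * I * ℓ * m / M) := by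
    rw [mul_sum]
    refine sum_congr rfl fun ℓ _ ↦ ?_
    rw [jacobiTheta₂'_term, jacobiTheta₂_term, show 2 * π * I * m * (ℓ / M) + π * I * m ^ 2 * (σ / M)
      = 2 * π * I * ℓ * m / M + π * I * m ^ 2 * σ / M by ring, Complex.exp_add]
    ring
  have hM : (√M : ℂ) ≠ 0 := by simpa using NeZero.ne M
  rw [hsum, sum_mul_exp_eq_sqrt_mul_dft_neg, dft_odd hf hodd m, thetaTerm]
  field_simp

lemma Complex.ofReal_mul_cpow {r : ℝ} (hr : 0 < r) {w : ℂ} (hw : w ≠ 0) (s : ℂ) :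
    ((r : ℂ) * w) ^ s = (r : ℂ) ^ s * w ^ s := by
  have hr' : (r : ℂ) ≠ 0 := ofReal_ne_zero.mpr hr.ne'
  rw [cpow_def_of_ne_zero (mul_ne_zero hr' hw), cpow_def_of_ne_zero hr', cpow_def_of_ne_zero hw,
    ← Complex.exp_add, ← add_mul, log_ofReal_mul hr hw, ofReal_log hr.le]

lemma Complex.natCast_cpow_three_halves (M : ℕ) : (M : ℂ) ^ (3 / 2 : ℂ) = M * √M := by
  rw [show (3 / 2 : ℂ) = ((3 / 2 : ℝ) : ℂ) by norm_num, ← ofReal_natCast,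
    ← ofReal_cpow (Nat.cast_nonneg M), ← ofReal_mul, Real.sqrt_eq_rpow,
    ← Real.rpow_one_add' (Nat.cast_nonneg M) (by norm_num)]
  norm_num

lemma neg_I_mul_cpow_three_halves {M : ℕ} [NeZero M] {τ : ℂ} (hτ : 0 < τ.im) :
    (-I * (-1 / τ / M)) ^ (3 / 2 : ℂ) = ((M : ℂ) * √M)⁻¹ * (τ / I) ^ (-(3 / 2) : ℂ) := by
  have hM : (0 : ℝ) < M := Nat.cast_pos.mpr (NeZero.pos M)
  have hw : 0 < (τ / I).re := by simpa [Complex.div_I] using hτ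
  have hw0 : τ / I ≠ 0 := fun h ↦ by simp [h] at hw
  have hinv : -I * (-1 / τ / M) = ((M : ℝ) * (τ / I) : ℂ)⁻¹ := by
    have hτ0 : τ ≠ 0 := fun h ↦ by simp [h] at hτ
    push_cast
    field_simp
  have harg : ((M : ℝ) * (τ / I) : ℂ).arg ≠ π := by
    refine fun h ↦ (arg_eq_pi_iff.mp h).1.not_gt ?_
    simpa using mul_pos hM hw
  rw [hinv, inv_cpow _ _ harg, ofReal_mul_cpow hM hw0, ofReal_natCast, natCast_cpow_three_halves,
    cpow_neg, mul_inv]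

/-- For an odd `M`-periodic `f`, the weight 3/2 modularity relation
`Θ(τ;1,f,M) = i (τ/i)^{-3/2} Θ(-1/τ; 1, U_M f, M)` holds for all `τ ∈ ℍ`. -/
theorem statement10 (M : ℕ) (hM : 0 < M) (f : ℤ → ℂ)
    (hf : ∀ n : ℤ, f (n + M) = f n) (hodd : ∀ n : ℤ, f (-n) = -f n)
    (τ : ℂ) (hτ : 0 < τ.im) :
    theta M 1 f τ
      = Complex.I * (τ / Complex.I) ^ (-(3 / 2) : ℂ) *
        theta M 1 (dft M f) (-1 / τ) := by
  have : NeZero M := ⟨hM.ne'⟩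
  have hsqrt : (√M : ℂ) ≠ 0 := by simpa using hM.ne'
  have hτ0 : τ ≠ 0 := fun h ↦ by simp [h] at hτ
  have hσ : 0 < (-1 / τ).im := by
    rw [neg_div, neg_im, one_div, inv_im, neg_div, neg_neg]
    exact div_pos hτ (normSq_pos.mpr hτ0)
  have hFE (ℓ : ℕ) : jacobiTheta₂' (ℓ / M) (-1 / τ / M)
      = -2 * π / (-I * (-1 / τ / M)) ^ (3 / 2 : ℂ) * jacobiTheta₂'' (ℓ / M) (M * τ) := by
    rw [jacobiTheta₂'_functional_equation', show -1 / (-1 / τ / M) = M * τ by field_simp]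
  rw [theta_one_eq_half_of_hasSum hodd (hasSum_thetaTerm_of_periodic hf hτ),
    theta_one_eq_half_of_hasSum (dft_odd hf hodd) (hasSum_thetaTerm_dft hf hodd hσ)]
  simp_rw [hFE, mul_left_comm (f _), ← mul_sum, neg_I_mul_cpow_three_halves hτ]
  field_simp
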